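/- Fix a composition η of d with n parts and an index i ∈ {1,…,n−1}. For compositions μ ≤ η and μ' ≤ η of d, the equality y^{2d}·m_{μ,η} = x_i^d·y^d·m_{μ',η} holds in K if and only if η = d·e_i, μ' = d·e_i and μ = d·e_n, where e_j denotes the composition of d having d in position j and 0 elsewhere. -/
import Mathlib

open MvPolynomial Finset

noncomputable section

/-- `Kk p` is the fraction field of `ℂ[x_1,…,x_p, y]`, a polynomial ring in `p+1` variables
(so the paper's `n` is `p+1`). -/
abbrev Kk (p : ℕ) := FractionRing (MvPolynomial (Fin (p+1)) ℂ)

variable {p : ℕ}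

/-- the images `x_i` (for `i = 1, …, p`) in the fraction field -/
def xv (i : Fin p) : Kk p :=
  algebraMap (MvPolynomial (Fin (p+1)) ℂ) (Kk p) (X i.castSucc)

/-- the image of `y` in the fraction field -/
def yv : Kk p :=
  algebraMap (MvPolynomial (Fin (p+1)) ℂ) (Kk p) (X (Fin.last p))

/-- `a · λ° = ∑_{i=1}^{n-1} a_i λ_i` -/
def aDot (a : Fin p → ℤ) (lam : Fin (p+1) → ℕ) : ℤ :=
  ∑ i : Fin p, a i * lam i.castSucc

/-- the monomial `m_{μ,λ} = (∏_{i<n} x_i^{λ_i - μ_i}) y^{-a·λ° - λ_n - μ_n}` -/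
def mMono (a : Fin p → ℤ) (μ lam : Fin (p+1) → ℕ) : Kk p :=
  (∏ i : Fin p, xv i ^ (lam i.castSucc - μ i.castSucc)) *
    yv ^ (-(aDot a lam) - (lam (Fin.last p) : ℤ) - (μ (Fin.last p) : ℤ))

lemma algebraMap_inj : Function.Injective
    (algebraMap (MvPolynomial (Fin (p+1)) ℂ) (Kk p)) :=
  IsFractionRing.injective _ _

lemma yv_ne_zero : (yv : Kk p) ≠ 0 := by
  simp only [yv, Ne, map_eq_zero_iff _ algebraMap_inj]
  exact X_ne_zero _

/-- reduce the zpow equation to an npow equation -/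
lemma step1 (d : ℕ) (a : Fin p → ℤ) (η μ μ' : Fin (p+1) → ℕ) (i : Fin p) :
    (yv ^ (2 * d) * mMono a μ η = xv i ^ d * yv ^ d * mMono a μ' η) ↔
    (yv ^ (2 * d + μ' (Fin.last p)) * ∏ j : Fin p, xv j ^ (η j.castSucc - μ j.castSucc)
      = xv i ^ d * yv ^ (d + μ (Fin.last p)) *
        ∏ j : Fin p, xv j ^ (η j.castSucc - μ' j.castSucc)) := by
  have hy : (yv : Kk p) ≠ 0 := yv_ne_zero
  set z : ℤ := -(aDot a η) - (η (Fin.last p) : ℤ) with hz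
  set c : ℤ := (μ (Fin.last p) : ℤ) + (μ' (Fin.last p) : ℤ) - z with hc
  have key : ∀ A B : Kk p, A = B ↔ A * yv ^ c = B * yv ^ c :=
    fun A B => (mul_left_injective₀ (zpow_ne_zero c hy)).eq_iff.symm
  rw [key]
  have L : yv ^ (2 * d) * mMono a μ η * yv ^ c
      = yv ^ (2 * d + μ' (Fin.last p)) *
        ∏ j : Fin p, xv j ^ (η j.castSucc - μ j.castSucc) := by
    rw [mMono, ← zpow_natCast (yv : Kk p) (2 * d),
      ← zpow_natCast (yv : Kk p) (2 * d + μ' (Fin.last p)),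
      show ((2 * d + μ' (Fin.last p) : ℕ) : ℤ)
        = ((2 * d : ℕ) : ℤ) + (z - (μ (Fin.last p) : ℤ)) + c by rw [hc]; push_cast; ring,
      show -(aDot a η) - (η (Fin.last p) : ℤ) - (μ (Fin.last p) : ℤ)
        = z - (μ (Fin.last p) : ℤ) by rw [hz],
      zpow_add₀ hy, zpow_add₀ hy]
    ring
  have R : xv i ^ d * yv ^ d * mMono a μ' η * yv ^ c
      = xv i ^ d * yv ^ (d + μ (Fin.last p)) *
        ∏ j : Fin p, xv j ^ (η j.castSucc - μ' j.castSucc) := by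
    rw [mMono, ← zpow_natCast (yv : Kk p) d,
      ← zpow_natCast (yv : Kk p) (d + μ (Fin.last p)),
      show ((d + μ (Fin.last p) : ℕ) : ℤ)
        = ((d : ℕ) : ℤ) + (z - (μ' (Fin.last p) : ℤ)) + c by rw [hc]; push_cast; ring,
      show -(aDot a η) - (η (Fin.last p) : ℤ) - (μ' (Fin.last p) : ℤ)
        = z - (μ' (Fin.last p) : ℤ) by rw [hz],
      zpow_add₀ hy, zpow_add₀ hy]
    ring
  rw [L, R]

/-- extract exponent identities from a monomial identity in the polynomial ring -/
lemma step2 (A B d : ℕ) (e e' : Fin p → ℕ) (i : Fin p)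
    (h : (X (Fin.last p) : MvPolynomial (Fin (p+1)) ℂ) ^ A * ∏ j : Fin p, X j.castSucc ^ e j
      = X i.castSucc ^ d * X (Fin.last p) ^ B * ∏ j : Fin p, X j.castSucc ^ e' j) :
    A = B ∧ ∀ j : Fin p, e j = (if j = i then d else 0) + e' j := by
  constructor
  · have h1 := congrArg (MvPolynomial.aeval
      (fun w : Fin (p+1) => if w = Fin.last p then (Polynomial.X : Polynomial ℂ) else 1)) h
    simp only [map_mul, map_pow, map_prod, MvPolynomial.aeval_X, if_pos rfl,
      if_neg (Fin.castSucc_lt_last _).ne, one_pow, prod_const_one, mul_one, one_mul] at h1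
    have := congrArg Polynomial.natDegree h1
    simpa using this
  · intro j
    have h1 := congrArg (MvPolynomial.aeval
      (fun w : Fin (p+1) => if w = (j.castSucc : Fin (p+1)) then (Polynomial.X : Polynomial ℂ) else 1)) h
    simp only [map_mul, map_pow, map_prod, MvPolynomial.aeval_X,
      if_neg (Fin.castSucc_lt_last _).ne', Fin.castSucc_inj, one_pow, one_mul, mul_one,
      ite_pow] at h1
    rw [Finset.prod_ite_eq', Finset.prod_ite_eq'] at h1
    simp only [mem_univ, if_pos] at h1
    by_cases hij : i = j
    · subst hij
      rw [if_pos rfl, ← pow_add] at h1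
      have := congrArg Polynomial.natDegree h1
      simp only [Polynomial.natDegree_X_pow] at this
      simp [this, if_pos rfl]
    · rw [if_neg hij, one_mul] at h1
      have := congrArg Polynomial.natDegree h1
      simp only [Polynomial.natDegree_X_pow] at this
      rw [if_neg (fun hh => hij hh.symm), zero_add]; exact this

/-- For a fixed composition `η` of `d` and index `i ∈ {1,…,n-1}`, and compositions
`μ ≤ η`, `μ' ≤ η` of `d`, the equality `y^{2d} m_{μ,η} = x_i^d y^d m_{μ',η}` holds in `K`
if and only if `η = d·e_i`, `μ' = d·e_i` and `μ = d·e_n`. -/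
theorem mMono_dependence_iff (p d : ℕ) (hp : 1 ≤ p) (hd : 1 ≤ d) (a : Fin p → ℤ)
    (η μ μ' : Fin (p+1) → ℕ)
    (hη : ∑ i, η i = d) (hμ : ∑ i, μ i = d) (hμ' : ∑ i, μ' i = d)
    (hle : ∀ i : Fin p, μ i.castSucc ≤ η i.castSucc)
    (hle' : ∀ i : Fin p, μ' i.castSucc ≤ η i.castSucc)
    (i : Fin p) :
    yv ^ (2 * d) * mMono a μ η = xv i ^ d * yv ^ d * mMono a μ' η ↔
      (η = fun j => if j = i.castSucc then d else 0) ∧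
      (μ' = fun j => if j = i.castSucc then d else 0) ∧
      (μ = fun j => if j = Fin.last p then d else 0) := by
  rw [step1]
  -- sum decompositions
  rw [Fin.sum_univ_castSucc] at hη hμ hμ'
  constructor
  · intro h
    -- turn into polynomial identity
    have hpoly : (X (Fin.last p) : MvPolynomial (Fin (p+1)) ℂ) ^ (2 * d + μ' (Fin.last p)) *
          ∏ j : Fin p, X j.castSucc ^ (η j.castSucc - μ j.castSucc)
        = X i.castSucc ^ d * X (Fin.last p) ^ (d + μ (Fin.last p)) *
          ∏ j : Fin p, X j.castSucc ^ (η j.castSucc - μ' j.castSucc) := by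
      apply algebraMap_inj
      simpa only [xv, yv, map_mul, map_pow, map_prod] using h
    obtain ⟨hAB, hexp⟩ := step2 _ _ _ _ _ _ hpoly
    -- μ (last) = d + μ' (last), hence μ last = d and μ' last = 0
    have hμlast : μ (Fin.last p) = d ∧ μ' (Fin.last p) = 0 := by
      have h1 : μ (Fin.last p) ≤ d := by omega
      omega
    obtain ⟨hml, hm'l⟩ := hμlast
    have hμ0 : ∀ j : Fin p, μ j.castSucc = 0 := by
      intro j
      have hsum0 : ∑ j : Fin p, μ j.castSucc = 0 := by omega
      exact (Finset.sum_eq_zero_iff.mp hsum0) j (mem_univ j)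
    -- μ' vanishes off i
    have hμ'0 : ∀ j : Fin p, j ≠ i → μ' j.castSucc = 0 := by
      intro j hj
      have := hexp j
      rw [if_neg hj, hμ0 j, zero_add, Nat.sub_zero] at this
      have := hle' j
      omega
    -- at i : η i = d and μ' i = d
    have hηi : η i.castSucc = d ∧ μ' i.castSucc = d := by
      have h1 := hexp i
      rw [if_pos rfl, hμ0 i, Nat.sub_zero] at h1
      have h2 := hle' i
      have h3 : η i.castSucc ≤ ∑ j : Fin p, η j.castSucc :=
        Finset.single_le_sum (f := fun j : Fin p => η j.castSucc) (fun j _ => Nat.zero_le _) (mem_univ i)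
      omega
    obtain ⟨hei, hm'i⟩ := hηi
    -- η vanishes off i
    have hη0 : ∀ j : Fin p, j ≠ i → η j.castSucc = 0 := by
      intro j hj
      have hsplit : ∑ j : Fin p, η j.castSucc
          = η i.castSucc + ∑ j ∈ univ.erase i, η j.castSucc :=
        (Finset.add_sum_erase univ _ (mem_univ i)).symm
      have hz : ∑ j ∈ univ.erase i, η j.castSucc = 0 := by omega
      exact (Finset.sum_eq_zero_iff.mp hz) j (Finset.mem_erase.mpr ⟨hj, mem_univ j⟩)
    have hηlast : η (Fin.last p) = 0 := by
      have hsplit : ∑ j : Fin p, η j.castSucc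
          = η i.castSucc + ∑ j ∈ univ.erase i, η j.castSucc :=
        (Finset.add_sum_erase univ _ (mem_univ i)).symm
      omega
    refine ⟨funext fun j => ?_, funext fun j => ?_, funext fun j => ?_⟩
    · induction j using Fin.lastCases with
      | last => rw [if_neg (Fin.castSucc_lt_last i).ne']; exact hηlast
      | cast j =>
        by_cases hj : j = i
        · subst hj; rw [if_pos rfl]; exact hei
        · rw [if_neg (by simpa [Fin.castSucc_inj] using hj)]; exact hη0 j hj
    · induction j using Fin.lastCases with
      | last => rw [if_neg (Fin.castSucc_lt_last i).ne']; exact hm'l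
      | cast j =>
        by_cases hj : j = i
        · subst hj; rw [if_pos rfl]; exact hm'i
        · rw [if_neg (by simpa [Fin.castSucc_inj] using hj)]; exact hμ'0 j hj
    · induction j using Fin.lastCases with
      | last => rw [if_pos rfl]; exact hml
      | cast j => rw [if_neg (Fin.castSucc_lt_last j).ne]; exact hμ0 j
  · rintro ⟨hη', hμ'', hμ'''⟩
    subst hη' hμ'' hμ'''
    simp only [if_pos rfl, if_neg (Fin.castSucc_lt_last _).ne, if_neg (Fin.castSucc_lt_last _).ne',
      Fin.castSucc_inj, Nat.sub_zero]
    have hprod1 : (∏ j : Fin p, xv j ^ (if (j:Fin p) = i then d else 0)) = xv i ^ d := by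
      rw [show (fun j : Fin p => xv j ^ (if j = i then d else 0))
          = fun j : Fin p => (if j = i then xv i ^ d else 1) by
        funext j; by_cases hj : j = i <;> simp [hj]]
      simp [Finset.prod_ite_eq']
    rw [hprod1]
    simp only [Nat.sub_self, pow_zero, prod_const_one, if_true, add_zero, mul_one]
    rw [two_mul]
    ring

end
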